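/- Let 𝕂 be ℝ or ℂ, let 1 ≤ p, r, q_1, …, q_n < ∞, and let E_1, …, E_n, F be Banach spaces over 𝕂. For a continuous n-linear operator T : E_1 × ⋯ × E_n → F the following are equivalent: (a) for every choice of sequences (x_j^{(i)})_{j∈ℕ} in E_i with sup_{ψ∈E_i*, ‖ψ‖≤1} ∑_{j=1}^∞ |ψ(x_j^{(i)})|^{q_i} < ∞ (i = 1, …, n) and every family (φ_{j_1…j_n})_{(j_1,…,j_n)∈ℕ^n} of functionals in F* with sup_{Φ∈F**, ‖Φ‖≤1} ∑_{(j_1,…,j_n)∈ℕ^n} |Φ(φ_{j_1…j_n})|^r < ∞, one has ∑_{(j_1,…,j_n)∈ℕ^n} |φ_{j_1…j_n}(T(x_{j_1}^{(1)},…,x_{j_n}^{(n)}))|^p < ∞; (b) T is multiple (p;q_1,…,q_n;r)-summing, i.e. there exists a constant C ≥ 0 such that for every m ∈ ℕ, all x_j^{(i)} ∈ E_i (1 ≤ j ≤ m, 1 ≤ i ≤ n) and all φ_{j_1…j_n} ∈ F* ((j_1,…,j_n) ∈ {1,…,m}^n), (∑_{j_1,…,j_n=1}^m |φ_{j_1…j_n}(T(x_{j_1}^{(1)},…,x_{j_n}^{(n)}))|^p)^{1/p}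 ≤ C · ‖(φ_{j_1…j_n})_{(j_1,…,j_n)∈{1,…,m}^n}‖_{w,r} · ∏_{i=1}^n ‖(x_j^{(i)})_{j=1}^m‖_{w,q_i}. -/

import Mathlib

open scoped BigOperators
noncomputable section

/-- The weak `ℓ^q` norm of a finite family in a normed space:
`sup_{‖φ‖ ≤ 1} (∑_j |φ(x_j)|^q)^{1/q}`. -/
def weakLpNorm (𝕂 : Type*) [RCLike 𝕂] {E : Type*} [NormedAddCommGroup E] [NormedSpace 𝕂 E]
    {J : Type*} [Fintype J] (q : ℝ) (x : J → E) : ℝ :=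
  ⨆ φ : {φ : E →L[𝕂] 𝕂 // ‖φ‖ ≤ 1}, (∑ j, ‖φ.1 (x j)‖ ^ q) ^ (1 / q)

/-!
Restricted to an initial segment `{0, …, m - 1}`, a weakly summable sequence has weak norm at
most the root of its partial-sum bound, so the inequality bounds all partial sums of the
multiple sum. Conversely, if no constant works then, by homogeneity, for every `k` there are
families of weak `ℓ^{q_i}`-norms `2^{-k/q_i}` and weak `ℓ^r`-norm `2^{-k/r}` whose multiple sum
exceeds `k`. Placing the `k`-th of them on the indices `Nat.pair k t` yields weakly summable
sequences, while their multiple sum contains every block and therefore diverges.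
-/

open Function Finset

section WeakNorm

variable {𝕂 : Type*} [RCLike 𝕂] {E : Type*} [NormedAddCommGroup E] [NormedSpace 𝕂 E]
  {J : Type*} [Fintype J] {q : ℝ}

lemma bddAbove_weakLpNorm (hq : 0 < q) (x : J → E) :
    BddAbove (Set.range fun φ : {φ : E →L[𝕂] 𝕂 // ‖φ‖ ≤ 1} =>
      (∑ j, ‖φ.1 (x j)‖ ^ q) ^ (1 / q)) := by
  refine ⟨(∑ j, ‖x j‖ ^ q) ^ (1 / q), ?_⟩
  rintro _ ⟨φ, rfl⟩
  dsimp only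
  gcongr with j
  exact φ.1.le_of_opNorm_le φ.2 _ |>.trans_eq (one_mul _)

lemma weakLpNorm_nonneg (x : J → E) : 0 ≤ weakLpNorm 𝕂 q x :=
  Real.iSup_nonneg fun _ => by positivity

lemma le_weakLpNorm (hq : 0 < q) (x : J → E) {φ : E →L[𝕂] 𝕂} (hφ : ‖φ‖ ≤ 1) :
    (∑ j, ‖φ (x j)‖ ^ q) ^ (1 / q) ≤ weakLpNorm 𝕂 q x :=
  le_ciSup (bddAbove_weakLpNorm hq x) ⟨φ, hφ⟩

lemma weakLpNorm_le (x : J → E) {M : ℝ}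
    (h : ∀ φ : E →L[𝕂] 𝕂, ‖φ‖ ≤ 1 → (∑ j, ‖φ (x j)‖ ^ q) ^ (1 / q) ≤ M) :
    weakLpNorm 𝕂 q x ≤ M :=
  have : Nonempty {φ : E →L[𝕂] 𝕂 // ‖φ‖ ≤ 1} := ⟨⟨0, by simp⟩⟩
  ciSup_le fun φ => h φ.1 φ.2

lemma sum_rpow_le_weakLpNorm_rpow (hq : 0 < q) (x : J → E) {φ : E →L[𝕂] 𝕂} (hφ : ‖φ‖ ≤ 1) :
    ∑ j, ‖φ (x j)‖ ^ q ≤ weakLpNorm 𝕂 q x ^ q := by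
  rw [← Real.rpow_inv_le_iff_of_pos (by positivity) (weakLpNorm_nonneg x) hq, ← one_div]
  exact le_weakLpNorm hq x hφ

lemma weakLpNorm_pos (hq : 0 < q) {x : J → E} {j : J} (hx : x j ≠ 0) :
    0 < weakLpNorm 𝕂 q x := by
  obtain ⟨g, hg, hgx⟩ := exists_dual_vector 𝕂 (x j) (norm_ne_zero_iff.2 hx)
  have : 0 < weakLpNorm 𝕂 q x ^ q :=
    calc 0 < ‖g (x j)‖ ^ q := by rw [hgx, RCLike.norm_ofReal, abs_norm]; positivity
      _ ≤ ∑ j', ‖g (x j')‖ ^ q :=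
          single_le_sum (f := fun j' => ‖g (x j')‖ ^ q) (fun _ _ => by positivity) (mem_univ j)
      _ ≤ weakLpNorm 𝕂 q x ^ q := sum_rpow_le_weakLpNorm_rpow hq x hg.le
  refine (weakLpNorm_nonneg x).lt_of_ne fun h => ?_
  rw [← h, Real.zero_rpow hq.ne'] at this
  exact this.false

lemma weakLpNorm_smul (hq : 0 < q) (a : 𝕂) (x : J → E) :
    weakLpNorm 𝕂 q (fun j => a • x j) = ‖a‖ * weakLpNorm 𝕂 q x := by
  rw [weakLpNorm, weakLpNorm, Real.mul_iSup_of_nonneg (norm_nonneg a)]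
  congr 1 with φ
  simp only [map_smul, smul_eq_mul, norm_mul, Real.mul_rpow (norm_nonneg _) (norm_nonneg _),
    ← mul_sum]
  rw [Real.mul_rpow (by positivity) (by positivity), ← Real.rpow_mul (norm_nonneg _),
    mul_one_div_cancel hq.ne', Real.rpow_one]

end WeakNorm

def WeaklySummable (𝕂 : Type*) [RCLike 𝕂] {E : Type*} [NormedAddCommGroup E] [NormedSpace 𝕂 E]
    {ι : Type*} (q : ℝ) (x : ι → E) : Prop :=
  ∃ M : ℝ, ∀ ψ : E →L[𝕂] 𝕂, ‖ψ‖ ≤ 1 → ∀ s : Finset ι, ∑ j ∈ s, ‖ψ (x j)‖ ^ q ≤ M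

section WeaklySummable

variable {𝕂 : Type*} [RCLike 𝕂] {E : Type*} [NormedAddCommGroup E] [NormedSpace 𝕂 E]
  {ι : Type*} {q : ℝ}

lemma weakLpNorm_comp_le {J : Type*} [Fintype J] (hq : 0 < q) {x : ι → E} {M : ℝ}
    (hM : ∀ ψ : E →L[𝕂] 𝕂, ‖ψ‖ ≤ 1 → ∀ s : Finset ι, ∑ j ∈ s, ‖ψ (x j)‖ ^ q ≤ M)
    {g : J → ι} (hg : Injective g) :
    weakLpNorm 𝕂 q (x ∘ g) ≤ M ^ (1 / q) := by
  refine weakLpNorm_le _ fun ψ hψ => ?_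
  gcongr
  simpa only [sum_map, Embedding.coeFn_mk, comp_apply] using hM ψ hψ (univ.map ⟨g, hg⟩)

lemma sum_le_tsum_of_blocks {κ : Type*} {J : κ → Type*} [∀ k, Fintype (J k)]
    {σ : (Σ k, J k) → ι} (hσ : Injective σ) {f : ι → ℝ} (hf : 0 ≤ f)
    (hf_range : ∀ j ∉ Set.range σ, f j = 0) {c : κ → ℝ} (hc : Summable c)
    (hfc : ∀ k, ∑ t, f (σ ⟨k, t⟩) ≤ c k) (s : Finset ι) :
    ∑ j ∈ s, f j ≤ ∑' k, c k := by
  classical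
  set B := s.preimage σ hσ.injOn
  calc ∑ j ∈ s, f j = ∑ a ∈ B, f (σ a) :=
        (sum_preimage σ s hσ.injOn f fun j _ hj => hf_range j hj).symm
    _ ≤ ∑ a ∈ (B.image Sigma.fst).sigma fun _ => univ, f (σ a) :=
        sum_le_sum_of_subset_of_nonneg
          (fun a ha => mem_sigma.2 ⟨mem_image_of_mem _ ha, mem_univ _⟩) fun _ _ _ => hf _
    _ = ∑ k ∈ B.image Sigma.fst, ∑ t, f (σ ⟨k, t⟩) := sum_sigma _ _ _
    _ ≤ ∑ k ∈ B.image Sigma.fst, c k := sum_le_sum fun k _ => hfc k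
    _ ≤ ∑' k, c k :=
        hc.sum_le_tsum _ fun k _ => (sum_nonneg fun t _ => hf (σ ⟨k, t⟩)).trans (hfc k)

lemma weaklySummable_extend (hq : 0 < q) {κ : Type*} {J : κ → Type*} [∀ k, Fintype (J k)]
    {σ : (Σ k, J k) → ι} (hσ : Injective σ) (y : (Σ k, J k) → E)
    (hy : Summable fun k => weakLpNorm 𝕂 q (fun t => y ⟨k, t⟩) ^ q) :
    WeaklySummable 𝕂 q (extend σ y 0) := by
  refine ⟨_, fun ψ hψ => sum_le_tsum_of_blocks hσ (fun _ => by positivity) (fun j hj => ?_) hy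
    fun k => ?_⟩
  · rw [extend_apply' _ _ _ hj, Pi.zero_apply, map_zero, norm_zero, Real.zero_rpow hq.ne']
  · simp only [hσ.extend_apply]
    exact sum_rpow_le_weakLpNorm_rpow hq _ hψ

end WeaklySummable

section MultipleSum

variable {𝕂 : Type*} [RCLike 𝕂] {n : ℕ} {E : Fin n → Type*} [∀ i, NormedAddCommGroup (E i)]
  [∀ i, NormedSpace 𝕂 (E i)] {F : Type*} [NormedAddCommGroup F] [NormedSpace 𝕂 F]
  (T : ContinuousMultilinearMap 𝕂 E F) {p r : ℝ} {q : Fin n → ℝ}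

def multipleSum (p : ℝ) {J : Type*} [Fintype J] (x : ∀ i, J → E i)
    (φ : (Fin n → J) → (F →L[𝕂] 𝕂)) : ℝ :=
  ∑ j : Fin n → J, ‖φ j (T fun i => x i (j i))‖ ^ p

lemma multipleSum_nonneg {J : Type*} [Fintype J] (x : ∀ i, J → E i)
    (φ : (Fin n → J) → (F →L[𝕂] 𝕂)) : 0 ≤ multipleSum T p x φ :=
  sum_nonneg fun _ _ => by positivity

lemma multipleSum_smul {J : Type*} [Fintype J] (a : 𝕂) (b : Fin n → 𝕂) (x : ∀ i, J → E i)
    (φ : (Fin n → J) → (F →L[𝕂] 𝕂)) :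
    multipleSum T p (fun i t => b i • x i t) (fun j => a • φ j) =
      (‖a‖ * ∏ i, ‖b i‖) ^ p * multipleSum T p x φ := by
  rw [multipleSum, multipleSum, mul_sum]
  refine sum_congr rfl fun j _ => ?_
  rw [T.map_smul_univ, smul_apply, map_smul, smul_eq_mul, smul_eq_mul,
    norm_mul, norm_mul, norm_prod, ← mul_assoc, Real.mul_rpow (by positivity) (norm_nonneg _)]

lemma weakLpNorm_pos_of_multipleSum_ne_zero (hp : p ≠ 0) (hr : 0 < r) (hq : ∀ i, 0 < q i)
    {J : Type*} [Fintype J] {x : ∀ i, J → E i} {φ : (Fin n → J) → (F →L[𝕂] 𝕂)}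
    (h : multipleSum T p x φ ≠ 0) :
    0 < weakLpNorm 𝕂 r φ ∧ ∀ i, 0 < weakLpNorm 𝕂 (q i) (x i) := by
  obtain ⟨j, -, hj⟩ := exists_ne_zero_of_sum_ne_zero h
  have hTj : φ j (T fun i => x i (j i)) ≠ 0 := fun h0 => hj (by
    rw [h0, norm_zero, Real.zero_rpow hp])
  refine ⟨weakLpNorm_pos hr fun h0 => hTj (by rw [h0, zero_apply]),
    fun i => weakLpNorm_pos (hq i) fun h0 => hTj (by rw [T.map_coord_zero i h0, map_zero])⟩

lemma exists_multipleSum_gt_of_not_bounded (hp : 0 < p) (hr : 0 < r) (hq : ∀ i, 0 < q i)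
    (h : ∀ C : ℝ, 0 ≤ C → ∃ (m : ℕ) (x : ∀ i, Fin m → E i)
      (φ : (Fin n → Fin m) → (F →L[𝕂] 𝕂)),
        C * weakLpNorm 𝕂 r φ * ∏ i, weakLpNorm 𝕂 (q i) (x i) < multipleSum T p x φ ^ (1 / p))
    {a : ℝ} (ha : 0 < a) {b : Fin n → ℝ} (hb : ∀ i, 0 < b i) (K : ℝ) :
    ∃ (m : ℕ) (x : ∀ i, Fin m → E i) (φ : (Fin n → Fin m) → (F →L[𝕂] 𝕂)),
      weakLpNorm 𝕂 r φ = a ∧ (∀ i, weakLpNorm 𝕂 (q i) (x i) = b i) ∧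
        K < multipleSum T p x φ := by
  have hab : 0 < a * ∏ i, b i := mul_pos ha (prod_pos fun i _ => hb i)
  obtain ⟨m, x, φ, hlt⟩ := h (max K 0 ^ (1 / p) / (a * ∏ i, b i)) (by positivity)
  have hRHS0 : 0 ≤ max K 0 ^ (1 / p) / (a * ∏ i, b i) * weakLpNorm 𝕂 r φ *
      ∏ i, weakLpNorm 𝕂 (q i) (x i) :=
    mul_nonneg (mul_nonneg (by positivity) (weakLpNorm_nonneg _))
      (prod_nonneg fun i _ => weakLpNorm_nonneg _)
  have hS : multipleSum T p x φ ≠ 0 := fun h0 => by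
    rw [h0, Real.zero_rpow (by positivity)] at hlt
    exact hlt.not_ge hRHS0
  obtain ⟨hφ, hx⟩ := weakLpNorm_pos_of_multipleSum_ne_zero T hp.ne' hr hq hS
  set α := a / weakLpNorm 𝕂 r φ
  set β := fun i => b i / weakLpNorm 𝕂 (q i) (x i)
  have hα : 0 < α := div_pos ha hφ
  have hβ : ∀ i, 0 < β i := fun i => div_pos (hb i) (hx i)
  refine ⟨m, fun i t => (β i : 𝕂) • x i t, fun j => (α : 𝕂) • φ j, ?_, fun i => ?_, ?_⟩
  · rw [weakLpNorm_smul hr, RCLike.norm_ofReal, abs_of_pos hα, div_mul_cancel₀ _ hφ.ne']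
  · rw [weakLpNorm_smul (hq i), RCLike.norm_ofReal, abs_of_pos (hβ i),
      div_mul_cancel₀ _ (hx i).ne']
  · have hαβ : 0 < α * ∏ i, β i := mul_pos hα (prod_pos fun i _ => hβ i)
    have hscale : (α * ∏ i, β i) * (max K 0 ^ (1 / p) / (a * ∏ i, b i) * weakLpNorm 𝕂 r φ *
        ∏ i, weakLpNorm 𝕂 (q i) (x i)) = max K 0 ^ (1 / p) := by
      have hb0 : ∏ i, b i ≠ 0 := (prod_pos fun i _ => hb i).ne'
      have hx0 : ∏ i, weakLpNorm 𝕂 (q i) (x i) ≠ 0 := (prod_pos fun i _ => hx i).ne'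
      simp only [α, β, prod_div_distrib]
      field_simp
    simp only [multipleSum_smul, RCLike.norm_ofReal, abs_of_pos hα, abs_of_pos (hβ _)]
    calc K ≤ max K 0 := le_max_left K 0
      _ = (max K 0 ^ (1 / p)) ^ p := by
          rw [one_div, Real.rpow_inv_rpow (le_max_right K 0) hp.ne']
      _ < ((α * ∏ i, β i) * multipleSum T p x φ ^ (1 / p)) ^ p := by
          rw [← hscale]
          exact Real.rpow_lt_rpow (mul_nonneg hαβ.le hRHS0) (mul_lt_mul_of_pos_left hlt hαβ) hp
      _ = (α * ∏ i, β i) ^ p * multipleSum T p x φ := by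
          have hS0 := multipleSum_nonneg T (p := p) x φ
          rw [Real.mul_rpow hαβ.le (by positivity), one_div, Real.rpow_inv_rpow hS0 hp.ne']

lemma exists_glued_families (hn : 1 ≤ n) (hr : 0 < r) (hq : ∀ i, 0 < q i) {m : ℕ → ℕ}
    (X : ∀ k, ∀ i, Fin (m k) → E i) (Ψ : ∀ k, (Fin n → Fin (m k)) → (F →L[𝕂] 𝕂))
    (hX : ∀ i, Summable fun k => weakLpNorm 𝕂 (q i) (X k i) ^ q i)
    (hΨ : Summable fun k => weakLpNorm 𝕂 r (Ψ k) ^ r) :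
    ∃ (x : ∀ i, ℕ → E i) (φ : (Fin n → ℕ) → (F →L[𝕂] 𝕂)),
      (∀ i, WeaklySummable 𝕂 (q i) (x i)) ∧ WeaklySummable 𝕂 r φ ∧
        ∀ k, ∃ s : Finset (Fin n → ℕ),
          ∑ j ∈ s, ‖φ j (T fun i => x i (j i))‖ ^ p = multipleSum T p (X k) (Ψ k) := by
  -- Block `k` sits on the indices `Nat.pair k t`; any single coordinate of a multi-index
  -- then determines the block it belongs to.
  let σx : (Σ k, Fin (m k)) → ℕ := fun a => Nat.pair a.1 a.2
  let σφ : (Σ k, Fin n → Fin (m k)) → (Fin n → ℕ) := fun a i => Nat.pair a.1 (a.2 i)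
  have hσx : Injective σx := by
    rintro ⟨k, t⟩ ⟨l, u⟩ h
    obtain ⟨rfl, htu⟩ : k = l ∧ (t : ℕ) = u := Nat.pair_eq_pair.1 h
    exact congrArg (Sigma.mk k) (Fin.val_injective htu)
  have hσφ : Injective σφ := by
    rintro ⟨k, v⟩ ⟨l, w⟩ h
    obtain rfl : k = l := (Nat.pair_eq_pair.1 (congrFun h ⟨0, hn⟩)).1
    exact congrArg (Sigma.mk k)
      (funext fun i => Fin.val_injective (Nat.pair_eq_pair.1 (congrFun h i)).2)
  refine ⟨fun i => extend σx (fun a => X a.1 i a.2) 0, extend σφ (fun a => Ψ a.1 a.2) 0,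
    fun i => weaklySummable_extend (hq i) hσx _ (hX i), weaklySummable_extend hr hσφ _ hΨ,
    fun k => ⟨univ.map ⟨fun v => σφ ⟨k, v⟩, hσφ.comp sigma_mk_injective⟩, ?_⟩⟩
  rw [sum_map, multipleSum]
  refine sum_congr rfl fun v _ => ?_
  simp only [Embedding.coeFn_mk, hσφ.extend_apply]
  congr 4 with i
  exact hσx.extend_apply _ _ ⟨k, v i⟩

lemma summable_of_multipleSum_le (hp : 0 < p) (hr : 0 < r) (hq : ∀ i, 0 < q i) {C : ℝ}
    (hC : 0 ≤ C)
    (h : ∀ (m : ℕ) (x : ∀ i, Fin m → E i) (φ : (Fin n → Fin m) → (F →L[𝕂] 𝕂)),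
      multipleSum T p x φ ^ (1 / p) ≤ C * weakLpNorm 𝕂 r φ * ∏ i, weakLpNorm 𝕂 (q i) (x i))
    {x : ∀ i, ℕ → E i} {φ : (Fin n → ℕ) → (F →L[𝕂] 𝕂)}
    (hx : ∀ i, WeaklySummable 𝕂 (q i) (x i)) (hφ : WeaklySummable 𝕂 r φ) :
    Summable fun j : Fin n → ℕ => ‖φ j (T fun i => x i (j i))‖ ^ p := by
  choose M hM using hx
  obtain ⟨N, hN⟩ := hφ
  set B := C * N ^ (1 / r) * ∏ i, M i ^ (1 / q i)
  refine summable_of_sum_le (c := B ^ p) (fun j => by positivity) fun s => ?_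
  set m := s.sup (fun j => univ.sup j) + 1
  let g : (Fin n → Fin m) ↪ (Fin n → ℕ) :=
    ⟨fun u i => u i, fun u v huv => funext fun i => Fin.val_injective (congrFun huv i)⟩
  have hs : s ⊆ univ.map g := fun j hj => mem_map.2
    ⟨fun i => ⟨j i, Nat.lt_succ_of_le ((le_sup (f := j) (mem_univ i)).trans
      (le_sup (f := fun j : Fin n → ℕ => univ.sup j) hj))⟩, mem_univ _, rfl⟩
  have hbound : multipleSum T p (fun i => x i ∘ Fin.val) (φ ∘ g) ^ (1 / p) ≤ B := by
    refine (h m _ _).trans ?_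
    have hWφ := weakLpNorm_comp_le hr hN g.injective
    have hWx := fun i => weakLpNorm_comp_le (hq i) (hM i) (Fin.val_injective (n := m))
    exact mul_le_mul (mul_le_mul_of_nonneg_left hWφ hC)
      (prod_le_prod (fun i _ => weakLpNorm_nonneg _) fun i _ => hWx i)
      (prod_nonneg fun i _ => weakLpNorm_nonneg _)
      (mul_nonneg hC ((weakLpNorm_nonneg _).trans hWφ))
  calc ∑ j ∈ s, ‖φ j (T fun i => x i (j i))‖ ^ p
      ≤ ∑ j ∈ univ.map g, ‖φ j (T fun i => x i (j i))‖ ^ p :=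
        sum_le_sum_of_subset_of_nonneg hs fun _ _ _ => by positivity
    _ = multipleSum T p (fun i => x i ∘ Fin.val) (φ ∘ g) := sum_map _ _ _
    _ ≤ B ^ p := by
        rw [one_div] at hbound
        exact (Real.rpow_inv_le_iff_of_pos (multipleSum_nonneg T _ _)
          ((Real.rpow_nonneg (multipleSum_nonneg T _ _) _).trans hbound) hp).1 hbound

lemma exists_multipleSum_le_of_summable (hn : 1 ≤ n) (hp : 0 < p) (hr : 0 < r)
    (hq : ∀ i, 0 < q i)
    (h : ∀ (x : ∀ i, ℕ → E i) (φ : (Fin n → ℕ) → (F →L[𝕂] 𝕂)),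
      (∀ i, WeaklySummable 𝕂 (q i) (x i)) → WeaklySummable 𝕂 r φ →
        Summable fun j : Fin n → ℕ => ‖φ j (T fun i => x i (j i))‖ ^ p) :
    ∃ C, 0 ≤ C ∧ ∀ (m : ℕ) (x : ∀ i, Fin m → E i) (φ : (Fin n → Fin m) → (F →L[𝕂] 𝕂)),
      multipleSum T p x φ ^ (1 / p) ≤ C * weakLpNorm 𝕂 r φ * ∏ i, weakLpNorm 𝕂 (q i) (x i) := by
  by_contra hb
  push Not at hb
  have hgeom : ∀ {s : ℝ}, 0 < s → Summable fun k : ℕ => (((1 / 2 : ℝ) ^ k) ^ s⁻¹) ^ s :=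
    fun hs => summable_geometric_two.congr fun k =>
      (Real.rpow_inv_rpow (by positivity) hs.ne').symm
  choose m X Ψ hΨ hX hS using fun k : ℕ =>
    exists_multipleSum_gt_of_not_bounded T hp hr hq hb (a := ((1 / 2) ^ k) ^ r⁻¹) (by positivity)
      (b := fun i => ((1 / 2) ^ k) ^ (q i)⁻¹) (fun i => by positivity) k
  obtain ⟨x, φ, hx, hφ, hblocks⟩ := exists_glued_families T (p := p) hn hr hq X Ψ
    (fun i => by simpa only [hX] using hgeom (hq i)) (by simpa only [hΨ] using hgeom hr)
  have hsum := h x φ hx hφ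
  obtain ⟨k, hk⟩ := exists_nat_gt (∑' j, ‖φ j (T fun i => x i (j i))‖ ^ p)
  obtain ⟨s, hs⟩ := hblocks k
  have := hsum.sum_le_tsum s fun _ _ => by positivity
  linarith [hS k]

end MultipleSum

theorem multiple_summing_r_iff_general
    {𝕂 : Type*} [RCLike 𝕂] {n : ℕ} (hn : 1 ≤ n)
    (p r : ℝ) (q : Fin n → ℝ) (hp : 1 ≤ p) (hr : 1 ≤ r) (hq : ∀ i, 1 ≤ q i)
    (E : Fin n → Type*) [∀ i, NormedAddCommGroup (E i)] [∀ i, NormedSpace 𝕂 (E i)]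
    (F : Type*) [NormedAddCommGroup F] [NormedSpace 𝕂 F]
    (T : ContinuousMultilinearMap 𝕂 E F) :
    (∀ (x : (i : Fin n) → ℕ → E i) (φ : (Fin n → ℕ) → (F →L[𝕂] 𝕂)),
        (∀ i, ∃ M : ℝ, ∀ ψ : E i →L[𝕂] 𝕂, ‖ψ‖ ≤ 1 →
          ∀ s : Finset ℕ, ∑ j ∈ s, ‖ψ (x i j)‖ ^ (q i) ≤ M) →
        (∃ M : ℝ, ∀ Φ : (F →L[𝕂] 𝕂) →L[𝕂] 𝕂, ‖Φ‖ ≤ 1 →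
          ∀ s : Finset (Fin n → ℕ), ∑ j ∈ s, ‖Φ (φ j)‖ ^ r ≤ M) →
        Summable (fun j : Fin n → ℕ => ‖φ j (T (fun i => x i (j i)))‖ ^ p))
    ↔
    (∃ C : ℝ, 0 ≤ C ∧ ∀ (m : ℕ) (x : (i : Fin n) → Fin m → E i)
        (φ : (Fin n → Fin m) → (F →L[𝕂] 𝕂)),
        (∑ j : Fin n → Fin m, ‖φ j (T (fun i => x i (j i)))‖ ^ p) ^ (1 / p) ≤
          C * weakLpNorm 𝕂 r φ * ∏ i, weakLpNorm 𝕂 (q i) (x i)) := by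
  have hp0 : 0 < p := by linarith
  have hr0 : 0 < r := by linarith
  have hq0 : ∀ i, 0 < q i := fun i => by linarith [hq i]
  exact ⟨exists_multipleSum_le_of_summable T hn hp0 hr0 hq0,
    fun ⟨C, hC, hbound⟩ _ _ hx hφ => summable_of_multipleSum_le T hp0 hr0 hq0 hC hbound hx hφ⟩

/-- characterization of multiple `(p;q₁,…,qₙ;r)`-summing multilinear operators:
the summability condition (a) is equivalent to the inequality condition (b). -/
theorem multiple_summing_r_iff
    {𝕂 : Type*} [RCLike 𝕂] {n : ℕ} (hn : 1 ≤ n)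
    (p r : ℝ) (q : Fin n → ℝ) (hp : 1 ≤ p) (hr : 1 ≤ r) (hq : ∀ i, 1 ≤ q i)
    (E : Fin n → Type*) [∀ i, NormedAddCommGroup (E i)] [∀ i, NormedSpace 𝕂 (E i)]
    [∀ i, CompleteSpace (E i)]
    (F : Type*) [NormedAddCommGroup F] [NormedSpace 𝕂 F] [CompleteSpace F]
    (T : ContinuousMultilinearMap 𝕂 E F) :
    (∀ (x : (i : Fin n) → ℕ → E i) (φ : (Fin n → ℕ) → (F →L[𝕂] 𝕂)),
        (∀ i, ∃ M : ℝ, ∀ ψ : E i →L[𝕂] 𝕂, ‖ψ‖ ≤ 1 →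
          ∀ s : Finset ℕ, ∑ j ∈ s, ‖ψ (x i j)‖ ^ (q i) ≤ M) →
        (∃ M : ℝ, ∀ Φ : (F →L[𝕂] 𝕂) →L[𝕂] 𝕂, ‖Φ‖ ≤ 1 →
          ∀ s : Finset (Fin n → ℕ), ∑ j ∈ s, ‖Φ (φ j)‖ ^ r ≤ M) →
        Summable (fun j : Fin n → ℕ => ‖φ j (T (fun i => x i (j i)))‖ ^ p))
    ↔
    (∃ C : ℝ, 0 ≤ C ∧ ∀ (m : ℕ) (x : (i : Fin n) → Fin m → E i)
        (φ : (Fin n → Fin m) → (F →L[𝕂] 𝕂)),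
        (∑ j : Fin n → Fin m, ‖φ j (T (fun i => x i (j i)))‖ ^ p) ^ (1 / p) ≤
          C * weakLpNorm 𝕂 r φ * ∏ i, weakLpNorm 𝕂 (q i) (x i)) :=
  multiple_summing_r_iff_general hn p r q hp hr hq E F T
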